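/- arXiv:2303.03531 — 3 statements merged into one kernel-verified Lean document; each statement's English description precedes it below -/
import Mathlib

section
/- For all integers k, l ≥ 0, the functions ψ_k form a complex orthonormal system with respect to the pairing 𝔾: namely 𝔾(ψ_k, ψ_l) = δ_{kl} and 𝔾(ψ_k, conj(ψ_l)) = 0. -/
open Real intervalIntegral

lemma HasDerivAt.congr_d {F : ℝ → ℝ} {v w : ℝ} {u : ℝ} (h : HasDerivAt F v u)
    (e : v = w) : HasDerivAt F w u := e ▸ h

lemma hd_lin (c u : ℝ) : HasDerivAt (fun x : ℝ => c * x) c u := by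
  simpa using (hasDerivAt_id u).const_mul c

lemma hd_sin (c u : ℝ) : HasDerivAt (fun x : ℝ => Real.sin (c * x)) (c * Real.cos (c * u)) u := by
  exact ((Real.hasDerivAt_sin (c * u)).comp u (hd_lin c u)).congr_deriv (mul_comm _ _)

lemma hd_cos (c u : ℝ) : HasDerivAt (fun x : ℝ => Real.cos (c * x)) (-(c * Real.sin (c * u))) u := by
  have := (Real.hasDerivAt_cos (c * u)).comp u (hd_lin c u)
  exact this.congr_deriv (by ring)

lemma ftc (f F : ℝ → ℝ) (hF : ∀ u, HasDerivAt F (f u) u) (hf : Continuous f) :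
    ∫ u in (-1:ℝ)..1, f u = F 1 - F (-1) :=
  intervalIntegral.integral_eq_sub_of_hasDerivAt (fun u _ => hF u) (hf.intervalIntegrable _ _)

lemma R_cos (a : ℝ) (ha : a ≠ 0) : ∫ u in (-1:ℝ)..1, Real.cos (a * u) = 2 * Real.sin a / a := by
  rw [ftc _ (fun x => Real.sin (a * x) / a)
    (fun u => ((hd_sin a u).div_const a).congr_d (by field_simp)) (by fun_prop)]
  rw [mul_one, mul_neg_one, Real.sin_neg]
  ring

lemma R_sin (a : ℝ) (ha : a ≠ 0) : ∫ u in (-1:ℝ)..1, Real.sin (a * u) = 0 := by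
  rw [ftc _ (fun x => -(Real.cos (a * x) / a))
    (fun u => ((hd_cos a u).div_const a).neg.congr_d (by field_simp)) (by fun_prop)]
  rw [mul_one, mul_neg_one, Real.cos_neg]
  ring

lemma R_ucos (a : ℝ) (ha : a ≠ 0) :
    ∫ u in (-1:ℝ)..1, u * Real.cos (a * u) = 0 := by
  rw [ftc _ (fun x => Real.cos (a * x) / a ^ 2 + x * Real.sin (a * x) / a)
    (fun u => (((hd_cos a u).div_const (a ^ 2)).add
        (((hasDerivAt_id u).mul (hd_sin a u)).div_const a)).congr_d
      (by rw [id_eq]; field_simp; ring)) (by fun_prop)]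
  rw [mul_one, mul_neg_one, Real.cos_neg, Real.sin_neg]
  ring

lemma R_usin (a : ℝ) (ha : a ≠ 0) :
    ∫ u in (-1:ℝ)..1, u * Real.sin (a * u) =
      2 * Real.sin a / a ^ 2 - 2 * Real.cos a / a := by
  rw [ftc _ (fun x => Real.sin (a * x) / a ^ 2 - x * Real.cos (a * x) / a)
    (fun u => (((hd_sin a u).div_const (a ^ 2)).sub
        (((hasDerivAt_id u).mul (hd_cos a u)).div_const a)).congr_d
      (by rw [id_eq]; field_simp; ring)) (by fun_prop)]
  rw [mul_one, mul_neg_one, Real.cos_neg, Real.sin_neg]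
  ring

lemma R_sincos (a b : ℝ) (h1 : a + b ≠ 0) (h2 : a - b ≠ 0) :
    ∫ u in (-1:ℝ)..1, Real.sin (a * u) * Real.cos (b * u) = 0 := by
  rw [ftc _ (fun x => -(Real.cos ((a + b) * x) / (2 * (a + b)))
      - Real.cos ((a - b) * x) / (2 * (a - b)))
    (fun u => (((hd_cos (a + b) u).div_const (2 * (a + b))).neg.sub
        ((hd_cos (a - b) u).div_const (2 * (a - b)))).congr_d (by
      have e1 : (a + b) * u = a * u + b * u := by ring
      have e2 : (a - b) * u = a * u - b * u := by ring
      rw [e1, e2, Real.sin_add, Real.sin_sub]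
      field_simp
      ring)) (by fun_prop)]
  simp only [mul_one, mul_neg_one, Real.cos_neg]
  ring

lemma R_sincos_self (a : ℝ) (ha : a ≠ 0) :
    ∫ u in (-1:ℝ)..1, Real.sin (a * u) * Real.cos (a * u) = 0 := by
  rw [ftc _ (fun x => -(Real.cos (2 * a * x) / (4 * a)))
    (fun u => ((hd_cos (2 * a) u).div_const (4 * a)).neg.congr_d (by
      have e1 : 2 * a * u = a * u + a * u := by ring
      rw [e1, Real.sin_add]
      field_simp
      ring)) (by fun_prop)]
  rw [mul_one, mul_neg_one, Real.cos_neg]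
  ring

lemma R_sinsin (a b : ℝ) (h1 : a + b ≠ 0) (h2 : a - b ≠ 0) :
    ∫ u in (-1:ℝ)..1, Real.sin (a * u) * Real.sin (b * u) =
      Real.sin (a - b) / (a - b) - Real.sin (a + b) / (a + b) := by
  rw [ftc _ (fun x => Real.sin ((a - b) * x) / (2 * (a - b))
      - Real.sin ((a + b) * x) / (2 * (a + b)))
    (fun u => (((hd_sin (a - b) u).div_const (2 * (a - b))).sub
        ((hd_sin (a + b) u).div_const (2 * (a + b)))).congr_d (by
      have e1 : (a + b) * u = a * u + b * u := by ring
      have e2 : (a - b) * u = a * u - b * u := by ring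
      rw [e1, e2, Real.cos_add, Real.cos_sub]
      field_simp
      ring)) (by fun_prop)]
  simp only [mul_one, mul_neg_one, Real.sin_neg]
  field_simp
  ring

lemma R_coscos (a b : ℝ) (h1 : a + b ≠ 0) (h2 : a - b ≠ 0) :
    ∫ u in (-1:ℝ)..1, Real.cos (a * u) * Real.cos (b * u) =
      Real.sin (a - b) / (a - b) + Real.sin (a + b) / (a + b) := by
  rw [ftc _ (fun x => Real.sin ((a - b) * x) / (2 * (a - b))
      + Real.sin ((a + b) * x) / (2 * (a + b)))
    (fun u => (((hd_sin (a - b) u).div_const (2 * (a - b))).add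
        ((hd_sin (a + b) u).div_const (2 * (a + b)))).congr_d (by
      have e1 : (a + b) * u = a * u + b * u := by ring
      have e2 : (a - b) * u = a * u - b * u := by ring
      rw [e1, e2, Real.cos_add, Real.cos_sub]
      field_simp
      ring)) (by fun_prop)]
  simp only [mul_one, mul_neg_one, Real.sin_neg]
  field_simp
  ring

lemma R_sinsq (a : ℝ) (ha : a ≠ 0) :
    ∫ u in (-1:ℝ)..1, Real.sin (a * u) * Real.sin (a * u) =
      1 - Real.sin a * Real.cos a / a := by
  rw [ftc _ (fun x => x / 2 - Real.sin (2 * a * x) / (4 * a))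
    (fun u => (((hasDerivAt_id u).div_const 2).sub
        ((hd_sin (2 * a) u).div_const (4 * a))).congr_d (by
      have e1 : 2 * a * u = a * u + a * u := by ring
      have e2 := Real.sin_sq_add_cos_sq (a * u)
      rw [e1, Real.cos_add]
      field_simp
      first
      | linear_combination (-4*a) * e2
      | linear_combination (-4) * e2)) (by fun_prop)]
  simp only [mul_one, mul_neg_one, Real.sin_neg]
  have e1 : 2 * a = a + a := by ring
  rw [e1, Real.sin_add]
  field_simp
  ring

lemma R_cossq (a : ℝ) (ha : a ≠ 0) :
    ∫ u in (-1:ℝ)..1, Real.cos (a * u) * Real.cos (a * u) =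
      1 + Real.sin a * Real.cos a / a := by
  rw [ftc _ (fun x => x / 2 + Real.sin (2 * a * x) / (4 * a))
    (fun u => (((hasDerivAt_id u).div_const 2).add
        ((hd_sin (2 * a) u).div_const (4 * a))).congr_d (by
      have e1 : 2 * a * u = a * u + a * u := by ring
      have e2 := Real.sin_sq_add_cos_sq (a * u)
      rw [e1, Real.cos_add]
      field_simp
      first
      | linear_combination (-4*a) * e2
      | linear_combination (-4) * e2)) (by fun_prop)]
  simp only [mul_one, mul_neg_one, Real.sin_neg]
  have e1 : 2 * a = a + a := by ring
  rw [e1, Real.sin_add]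
  field_simp
  ring

lemma sin_pi_nat (n : ℕ) : Real.sin (Real.pi * n) = 0 := by
  rw [mul_comm]; exact Real.sin_nat_mul_pi n

lemma cos_pi_nat (n : ℕ) : Real.cos (Real.pi * n) = (-1) ^ n := by
  have h := Real.cos_nat_mul_pi_sub 0 n
  simpa [mul_comm] using h

lemma pi_nat_ne (n : ℕ) (hn : n ≠ 0) : Real.pi * (n : ℝ) ≠ 0 :=
  mul_ne_zero Real.pi_ne_zero (Nat.cast_ne_zero.mpr hn)

lemma N_cos (n : ℕ) (hn : n ≠ 0) : ∫ u in (-1:ℝ)..1, Real.cos (Real.pi * n * u) = 0 := by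
  rw [R_cos _ (pi_nat_ne n hn), sin_pi_nat]; simp

lemma N_sin (n : ℕ) (hn : n ≠ 0) : ∫ u in (-1:ℝ)..1, Real.sin (Real.pi * n * u) = 0 :=
  R_sin _ (pi_nat_ne n hn)

lemma N_ucos (n : ℕ) (hn : n ≠ 0) : ∫ u in (-1:ℝ)..1, u * Real.cos (Real.pi * n * u) = 0 :=
  R_ucos _ (pi_nat_ne n hn)

lemma N_usin (n : ℕ) (hn : n ≠ 0) :
    ∫ u in (-1:ℝ)..1, u * Real.sin (Real.pi * n * u) = -(2 * (-1) ^ n / (Real.pi * n)) := by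
  rw [R_usin _ (pi_nat_ne n hn), sin_pi_nat, cos_pi_nat]; ring

lemma pipl (k l : ℕ) : Real.pi * (k : ℝ) + Real.pi * l = ((k + l : ℕ) : ℝ) * Real.pi := by
  push_cast; ring

lemma pimi (k l : ℕ) : Real.pi * (k : ℝ) - Real.pi * l = (((k : ℤ) - l : ℤ) : ℝ) * Real.pi := by
  push_cast; ring

lemma N_sincos (k l : ℕ) (hk : k ≠ 0) (hl : l ≠ 0) :
    ∫ u in (-1:ℝ)..1, Real.sin (Real.pi * k * u) * Real.cos (Real.pi * l * u) = 0 := by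
  rcases eq_or_ne k l with rfl | hkl
  · exact R_sincos_self _ (pi_nat_ne k hk)
  · refine R_sincos _ _ ?_ ?_
    · rw [pipl]; exact mul_ne_zero (Nat.cast_ne_zero.mpr (by omega)) Real.pi_ne_zero
    · rw [pimi]; refine mul_ne_zero ?_ Real.pi_ne_zero
      simp only [ne_eq, Int.cast_sub, Int.cast_natCast]
      exact sub_ne_zero.mpr (fun h => hkl (by exact_mod_cast h))

lemma N_sinsin (k l : ℕ) (hk : k ≠ 0) (hl : l ≠ 0) :
    ∫ u in (-1:ℝ)..1, Real.sin (Real.pi * k * u) * Real.sin (Real.pi * l * u) =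
      if k = l then 1 else 0 := by
  rcases eq_or_ne k l with rfl | hkl
  · rw [if_pos rfl, R_sinsq _ (pi_nat_ne k hk), sin_pi_nat]; ring
  · rw [if_neg hkl, R_sinsin _ _ ?h1 ?h2, pipl, pimi, Real.sin_int_mul_pi,
      Real.sin_nat_mul_pi]
    · simp
    case h1 => rw [pipl]; exact mul_ne_zero (Nat.cast_ne_zero.mpr (by omega)) Real.pi_ne_zero
    case h2 =>
      rw [pimi]; refine mul_ne_zero ?_ Real.pi_ne_zero
      simp only [ne_eq, Int.cast_sub, Int.cast_natCast]
      exact sub_ne_zero.mpr (fun h => hkl (by exact_mod_cast h))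

lemma N_coscos (k l : ℕ) (hk : k ≠ 0) (hl : l ≠ 0) :
    ∫ u in (-1:ℝ)..1, Real.cos (Real.pi * k * u) * Real.cos (Real.pi * l * u) =
      if k = l then 1 else 0 := by
  rcases eq_or_ne k l with rfl | hkl
  · rw [if_pos rfl, R_cossq _ (pi_nat_ne k hk), sin_pi_nat]; ring
  · rw [if_neg hkl, R_coscos _ _ ?h1 ?h2, pipl, pimi, Real.sin_int_mul_pi,
      Real.sin_nat_mul_pi]
    · simp
    case h1 => rw [pipl]; exact mul_ne_zero (Nat.cast_ne_zero.mpr (by omega)) Real.pi_ne_zero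
    case h2 =>
      rw [pimi]; refine mul_ne_zero ?_ Real.pi_ne_zero
      simp only [ne_eq, Int.cast_sub, Int.cast_natCast]
      exact sub_ne_zero.mpr (fun h => hkl (by exact_mod_cast h))

lemma N_one : ∫ _u in (-1:ℝ)..1, (1:ℝ) = 2 := by simp; norm_num

lemma N_u : ∫ u in (-1:ℝ)..1, u = 0 := by
  rw [integral_id]; norm_num

section combo

open Complex

lemma cont_term {g : ℝ → ℝ} (c : ℂ) (hg : Continuous g) :
    Continuous (fun u : ℝ => c * (g u : ℂ)) :=
  continuous_const.mul (Complex.continuous_ofReal.comp hg)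

lemma int_term {g : ℝ → ℝ} (c : ℂ) (hg : Continuous g) :
    IntervalIntegrable (fun u : ℝ => c * (g u : ℂ)) MeasureTheory.volume (-1) 1 :=
  (cont_term c hg).intervalIntegrable _ _

lemma eval_term {g : ℝ → ℝ} (c : ℂ) (hg : Continuous g) :
    ∫ u in (-1:ℝ)..1, c * (g u : ℂ) = c * ((∫ u in (-1:ℝ)..1, g u : ℝ) : ℂ) := by
  rw [intervalIntegral.integral_const_mul, intervalIntegral.integral_ofReal]

lemma combo8 (c₁ c₂ c₃ c₄ c₅ c₆ c₇ c₈ : ℂ) (g₁ g₂ g₃ g₄ g₅ g₆ g₇ g₈ : ℝ → ℝ)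
    (h₁ : Continuous g₁) (h₂ : Continuous g₂) (h₃ : Continuous g₃) (h₄ : Continuous g₄)
    (h₅ : Continuous g₅) (h₆ : Continuous g₆) (h₇ : Continuous g₇) (h₈ : Continuous g₈) :
    ∫ u in (-1:ℝ)..1,
      (c₁ * (g₁ u : ℂ) + c₂ * (g₂ u : ℂ) + c₃ * (g₃ u : ℂ) + c₄ * (g₄ u : ℂ)
        + c₅ * (g₅ u : ℂ) + c₆ * (g₆ u : ℂ) + c₇ * (g₇ u : ℂ) + c₈ * (g₈ u : ℂ)) =
    c₁ * ((∫ u in (-1:ℝ)..1, g₁ u : ℝ) : ℂ) + c₂ * ((∫ u in (-1:ℝ)..1, g₂ u : ℝ) : ℂ)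
      + c₃ * ((∫ u in (-1:ℝ)..1, g₃ u : ℝ) : ℂ) + c₄ * ((∫ u in (-1:ℝ)..1, g₄ u : ℝ) : ℂ)
      + c₅ * ((∫ u in (-1:ℝ)..1, g₅ u : ℝ) : ℂ) + c₆ * ((∫ u in (-1:ℝ)..1, g₆ u : ℝ) : ℂ)
      + c₇ * ((∫ u in (-1:ℝ)..1, g₇ u : ℝ) : ℂ) + c₈ * ((∫ u in (-1:ℝ)..1, g₈ u : ℝ) : ℂ) := by
  have i1 := int_term c₁ h₁
  have i2 := int_term c₂ h₂
  have i3 := int_term c₃ h₃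
  have i4 := int_term c₄ h₄
  have i5 := int_term c₅ h₅
  have i6 := int_term c₆ h₆
  have i7 := int_term c₇ h₇
  have i8 := int_term c₈ h₈
  rw [intervalIntegral.integral_add (((((((i1.add i2).add i3).add i4).add i5).add i6).add i7)) i8,
    intervalIntegral.integral_add ((((((i1.add i2).add i3).add i4).add i5).add i6)) i7,
    intervalIntegral.integral_add (((((i1.add i2).add i3).add i4).add i5)) i6,
    intervalIntegral.integral_add ((((i1.add i2).add i3).add i4)) i5,
    intervalIntegral.integral_add (((i1.add i2).add i3)) i4,
    intervalIntegral.integral_add ((i1.add i2)) i3,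
    intervalIntegral.integral_add i1 i2,
    eval_term c₁ h₁, eval_term c₂ h₂, eval_term c₃ h₃, eval_term c₄ h₄,
    eval_term c₅ h₅, eval_term c₆ h₆, eval_term c₇ h₇, eval_term c₈ h₈]

end combo

/-- The Hermitian pairing `𝔾(φ₁,φ₂) = -(i/2)∫_{-1}^{1} (φ₁'·conj(φ₂) − φ₁·conj(φ₂')) du`. -/
noncomputable def Gpair (φ₁ φ₂ : ℝ → ℂ) : ℂ :=
  (-Complex.I / 2) *
    ∫ u in (-1 : ℝ)..1,
      (deriv φ₁ u * (starRingEnd ℂ) (φ₂ u) - φ₁ u * (starRingEnd ℂ) (deriv φ₂ u))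

/-- The basis functions `ψ_k`: `ψ₀(u) = 1 + i·u/2` and, for `k ≥ 1`,
`ψ_k(u) = (-1)^k + cos(πku) + i·sin(πku)/(2πk)`. -/
noncomputable def psi (k : ℕ) (u : ℝ) : ℂ :=
  if k = 0 then 1 + Complex.I * u / 2
  else (-1 : ℂ) ^ k + (Real.cos (Real.pi * k * u) : ℂ)
    + Complex.I * (Real.sin (Real.pi * k * u) : ℂ) / (2 * Real.pi * k)

noncomputable def dpsi (k : ℕ) (u : ℝ) : ℂ :=
  if k = 0 then Complex.I / 2
  else -((Real.pi * k * Real.sin (Real.pi * k * u) : ℝ) : ℂ)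
    + Complex.I * ((Real.cos (Real.pi * k * u) : ℝ) : ℂ) / 2

lemma aux_cancel (c p n : ℂ) (hp : p ≠ 0) (hn : n ≠ 0) :
    Complex.I * (p * n * c) / (2 * p * n) = Complex.I * c / 2 := by
  field_simp

lemma HasDerivAt.congr_c {F : ℝ → ℂ} {v w : ℂ} {u : ℝ} (h : HasDerivAt F v u)
    (e : v = w) : HasDerivAt F w u := e ▸ h

lemma hasDerivAt_psi (k : ℕ) (u : ℝ) : HasDerivAt (psi k) (dpsi k u) u := by
  match k with
  | 0 =>
    have hfun : psi 0 = fun x : ℝ => 1 + Complex.I * (x : ℂ) / 2 := by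
      funext x; simp [psi]
    rw [hfun]
    have h := ((((hasDerivAt_id u).ofReal_comp).const_mul Complex.I).div_const 2).const_add
      (1 : ℂ)
    refine h.congr_c ?_
    simp [dpsi]
  | (k + 1) =>
    have hne : (k + 1 : ℕ) ≠ 0 := Nat.succ_ne_zero k
    have hfun : psi (k + 1) = fun x : ℝ => (-1 : ℂ) ^ (k + 1)
        + (Real.cos (Real.pi * (k + 1 : ℕ) * x) : ℂ)
        + Complex.I * (Real.sin (Real.pi * (k + 1 : ℕ) * x) : ℂ)
          / (2 * Real.pi * (k + 1 : ℕ)) := by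
      funext x; simp only [psi, hne, if_false]
    rw [hfun]
    have hf := ((hd_cos (Real.pi * (k + 1 : ℕ)) u).ofReal_comp).const_add
      ((-1 : ℂ) ^ (k + 1))
    have hg := (((hd_sin (Real.pi * (k + 1 : ℕ)) u).ofReal_comp).const_mul
      Complex.I).div_const (2 * Real.pi * ((k + 1 : ℕ) : ℂ))
    refine (hf.add hg).congr_c ?_
    have hπ : (Real.pi : ℂ) ≠ 0 := Complex.ofReal_ne_zero.mpr Real.pi_ne_zero
    have hk : ((k + 1 : ℕ) : ℂ) ≠ 0 := Nat.cast_ne_zero.mpr hne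
    simp only [dpsi, hne, if_false, Complex.ofReal_mul, Complex.ofReal_neg,
      Complex.ofReal_natCast]
    congr 1
    exact aux_cancel _ _ _ hπ hk

lemma deriv_psi (k : ℕ) : deriv (psi k) = fun u => dpsi k u :=
  funext fun u => (hasDerivAt_psi k u).deriv

lemma deriv_conj_psi (k : ℕ) :
    deriv (fun u => (starRingEnd ℂ) (psi k u)) = fun u => (starRingEnd ℂ) (dpsi k u) :=
  funext fun u => ((hasDerivAt_psi k u).star).deriv

set_option maxHeartbeats 2000000 in
lemma G1_pos (k l : ℕ) (hk : k ≠ 0) (hl : l ≠ 0) :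
    Gpair (psi k) (psi l) = if k = l then 1 else 0 := by
  have hπ : (Real.pi : ℂ) ≠ 0 := Complex.ofReal_ne_zero.mpr Real.pi_ne_zero
  have hkc : (k : ℂ) ≠ 0 := Nat.cast_ne_zero.mpr hk
  have hlc : (l : ℂ) ≠ 0 := Nat.cast_ne_zero.mpr hl
  have key : ∀ u : ℝ,
      dpsi k u * (starRingEnd ℂ) (psi l u) - psi k u * (starRingEnd ℂ) (dpsi l u)
      = (-(Real.pi * k) * (-1) ^ l : ℂ) * ((Real.sin (Real.pi * k * u) : ℝ) : ℂ)
        + ((-1) ^ k * (Real.pi * l) : ℂ) * ((Real.sin (Real.pi * l * u) : ℝ) : ℂ)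
        + (Complex.I * (-1) ^ l / 2) * ((Real.cos (Real.pi * k * u) : ℝ) : ℂ)
        + (Complex.I * (-1) ^ k / 2) * ((Real.cos (Real.pi * l * u) : ℝ) : ℂ)
        + (-(Real.pi * k) - 1 / (4 * Real.pi * k) : ℂ)
            * ((Real.sin (Real.pi * k * u) * Real.cos (Real.pi * l * u) : ℝ) : ℂ)
        + ((Real.pi * l) + 1 / (4 * Real.pi * l) : ℂ)
            * ((Real.sin (Real.pi * l * u) * Real.cos (Real.pi * k * u) : ℝ) : ℂ)
        + (Complex.I * (Real.pi * k / (2 * Real.pi * l) + Real.pi * l / (2 * Real.pi * k)))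
            * ((Real.sin (Real.pi * k * u) * Real.sin (Real.pi * l * u) : ℝ) : ℂ)
        + Complex.I * ((Real.cos (Real.pi * k * u) * Real.cos (Real.pi * l * u) : ℝ) : ℂ) := by
    intro u
    simp only [psi, dpsi, if_neg hk, if_neg hl, map_add, map_mul, map_div₀, map_pow,
      map_neg, map_one, map_ofNat, Complex.conj_ofReal, Complex.conj_I, map_natCast]
    push_cast
    ring_nf
    simp only [Complex.I_sq]
    field_simp
  rw [Gpair, deriv_psi k, deriv_psi l]
  simp only [key]
  rw [combo8]
  · rw [N_sin k hk, N_sin l hl, N_cos k hk, N_cos l hl, N_sincos k l hk hl,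
      N_sincos l k hl hk, N_sinsin k l hk hl, N_coscos k l hk hl]
    split_ifs with h
    · subst h
      push_cast
      field_simp
      ring_nf
      rw [Complex.I_sq]
      ring
    · push_cast
      ring
  all_goals fun_prop

lemma G1_00 : Gpair (psi 0) (psi 0) = 1 := by
  have key : ∀ u : ℝ,
      dpsi 0 u * (starRingEnd ℂ) (psi 0 u) - psi 0 u * (starRingEnd ℂ) (dpsi 0 u)
        = Complex.I := by
    intro u
    simp only [psi, dpsi, reduceIte, map_add, map_mul, map_div₀, map_one, map_ofNat,
      Complex.conj_ofReal, Complex.conj_I]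
    ring
  rw [Gpair, deriv_psi 0]
  simp only [key]
  rw [intervalIntegral.integral_const]
  simp [Complex.real_smul]
  ring_nf
  simp [Complex.I_sq]

lemma G1_0l (l : ℕ) (hl : l ≠ 0) : Gpair (psi 0) (psi l) = 0 := by
  have hπ : (Real.pi : ℂ) ≠ 0 := Complex.ofReal_ne_zero.mpr Real.pi_ne_zero
  have hlc : (l : ℂ) ≠ 0 := Nat.cast_ne_zero.mpr hl
  have key : ∀ u : ℝ,
      dpsi 0 u * (starRingEnd ℂ) (psi l u) - psi 0 u * (starRingEnd ℂ) (dpsi l u)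
      = (Complex.I * (-1) ^ l / 2) * ((1 : ℝ) : ℂ)
        + Complex.I * ((Real.cos (Real.pi * l * u) : ℝ) : ℂ)
        + ((Real.pi * l) + 1 / (4 * Real.pi * l) : ℂ) * ((Real.sin (Real.pi * l * u) : ℝ) : ℂ)
        + (Complex.I * (Real.pi * l) / 2) * ((u * Real.sin (Real.pi * l * u) : ℝ) : ℂ)
        + (-(1/4) : ℂ) * ((u * Real.cos (Real.pi * l * u) : ℝ) : ℂ)
        + 0 * ((1 : ℝ) : ℂ) + 0 * ((1 : ℝ) : ℂ) + 0 * ((1 : ℝ) : ℂ) := by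
    intro u
    simp only [psi, dpsi, reduceIte, if_neg hl, map_add, map_mul, map_div₀, map_pow,
      map_neg, map_one, map_ofNat, Complex.conj_ofReal, Complex.conj_I, map_natCast]
    push_cast
    ring_nf
    simp only [Complex.I_sq]
    field_simp
    all_goals ring
  rw [Gpair, deriv_psi 0, deriv_psi l]
  simp only [key]
  rw [combo8]
  · rw [N_one, N_cos l hl, N_sin l hl, N_usin l hl, N_ucos l hl]
    push_cast
    field_simp
    all_goals ring
  all_goals fun_prop

lemma G1_k0 (k : ℕ) (hk : k ≠ 0) : Gpair (psi k) (psi 0) = 0 := by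
  have hπ : (Real.pi : ℂ) ≠ 0 := Complex.ofReal_ne_zero.mpr Real.pi_ne_zero
  have hkc : (k : ℂ) ≠ 0 := Nat.cast_ne_zero.mpr hk
  have key : ∀ u : ℝ,
      dpsi k u * (starRingEnd ℂ) (psi 0 u) - psi k u * (starRingEnd ℂ) (dpsi 0 u)
      = (Complex.I * (-1) ^ k / 2) * ((1 : ℝ) : ℂ)
        + Complex.I * ((Real.cos (Real.pi * k * u) : ℝ) : ℂ)
        + (-(Real.pi * k) - 1 / (4 * Real.pi * k) : ℂ) * ((Real.sin (Real.pi * k * u) : ℝ) : ℂ)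
        + (Complex.I * (Real.pi * k) / 2) * ((u * Real.sin (Real.pi * k * u) : ℝ) : ℂ)
        + ((1/4) : ℂ) * ((u * Real.cos (Real.pi * k * u) : ℝ) : ℂ)
        + 0 * ((1 : ℝ) : ℂ) + 0 * ((1 : ℝ) : ℂ) + 0 * ((1 : ℝ) : ℂ) := by
    intro u
    simp only [psi, dpsi, reduceIte, if_neg hk, map_add, map_mul, map_div₀, map_pow,
      map_neg, map_one, map_ofNat, Complex.conj_ofReal, Complex.conj_I, map_natCast]
    push_cast
    ring_nf
    simp only [Complex.I_sq]
    field_simp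
    all_goals ring
  rw [Gpair, deriv_psi k, deriv_psi 0]
  simp only [key]
  rw [combo8]
  · rw [N_one, N_cos k hk, N_sin k hk, N_usin k hk, N_ucos k hk]
    push_cast
    field_simp
    all_goals ring
  all_goals fun_prop

lemma G2_00 : Gpair (psi 0) (fun u => (starRingEnd ℂ) (psi 0 u)) = 0 := by
  have key : ∀ u : ℝ,
      dpsi 0 u * (starRingEnd ℂ) ((starRingEnd ℂ) (psi 0 u))
        - psi 0 u * (starRingEnd ℂ) ((starRingEnd ℂ) (dpsi 0 u)) = 0 := by
    intro u
    simp only [Complex.conj_conj, psi, dpsi, reduceIte]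
    ring
  rw [Gpair, deriv_psi 0, deriv_conj_psi 0]
  simp only [key]
  simp

lemma G2_0l (l : ℕ) (hl : l ≠ 0) : Gpair (psi 0) (fun u => (starRingEnd ℂ) (psi l u)) = 0 := by
  have hπ : (Real.pi : ℂ) ≠ 0 := Complex.ofReal_ne_zero.mpr Real.pi_ne_zero
  have hlc : (l : ℂ) ≠ 0 := Nat.cast_ne_zero.mpr hl
  have key : ∀ u : ℝ,
      dpsi 0 u * (starRingEnd ℂ) ((starRingEnd ℂ) (psi l u))
        - psi 0 u * (starRingEnd ℂ) ((starRingEnd ℂ) (dpsi l u))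
      = (Complex.I * (-1) ^ l / 2) * ((1 : ℝ) : ℂ)
        + ((Real.pi * l) - 1 / (4 * Real.pi * l) : ℂ) * ((Real.sin (Real.pi * l * u) : ℝ) : ℂ)
        + (Complex.I * (Real.pi * l) / 2) * ((u * Real.sin (Real.pi * l * u) : ℝ) : ℂ)
        + ((1/4) : ℂ) * ((u * Real.cos (Real.pi * l * u) : ℝ) : ℂ)
        + 0 * ((1 : ℝ) : ℂ) + 0 * ((1 : ℝ) : ℂ) + 0 * ((1 : ℝ) : ℂ) + 0 * ((1 : ℝ) : ℂ) := by
    intro u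
    simp only [Complex.conj_conj, psi, dpsi, reduceIte, if_neg hl]
    push_cast
    ring_nf
    simp only [Complex.I_sq]
    field_simp
    all_goals ring
  rw [Gpair, deriv_psi 0, deriv_conj_psi l]
  simp only [key]
  rw [combo8]
  · rw [N_one, N_sin l hl, N_usin l hl, N_ucos l hl]
    push_cast
    field_simp
    all_goals ring
  all_goals fun_prop

lemma G2_k0 (k : ℕ) (hk : k ≠ 0) : Gpair (psi k) (fun u => (starRingEnd ℂ) (psi 0 u)) = 0 := by
  have hπ : (Real.pi : ℂ) ≠ 0 := Complex.ofReal_ne_zero.mpr Real.pi_ne_zero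
  have hkc : (k : ℂ) ≠ 0 := Nat.cast_ne_zero.mpr hk
  have key : ∀ u : ℝ,
      dpsi k u * (starRingEnd ℂ) ((starRingEnd ℂ) (psi 0 u))
        - psi k u * (starRingEnd ℂ) ((starRingEnd ℂ) (dpsi 0 u))
      = (-(Complex.I * (-1) ^ k / 2)) * ((1 : ℝ) : ℂ)
        + (-(Real.pi * k) + 1 / (4 * Real.pi * k) : ℂ) * ((Real.sin (Real.pi * k * u) : ℝ) : ℂ)
        + (-(Complex.I * (Real.pi * k) / 2)) * ((u * Real.sin (Real.pi * k * u) : ℝ) : ℂ)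
        + (-(1/4) : ℂ) * ((u * Real.cos (Real.pi * k * u) : ℝ) : ℂ)
        + 0 * ((1 : ℝ) : ℂ) + 0 * ((1 : ℝ) : ℂ) + 0 * ((1 : ℝ) : ℂ) + 0 * ((1 : ℝ) : ℂ) := by
    intro u
    simp only [Complex.conj_conj, psi, dpsi, reduceIte, if_neg hk]
    push_cast
    ring_nf
    simp only [Complex.I_sq]
    field_simp
    all_goals ring
  rw [Gpair, deriv_psi k, deriv_conj_psi 0]
  simp only [key]
  rw [combo8]
  · rw [N_one, N_sin k hk, N_usin k hk, N_ucos k hk]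
    push_cast
    field_simp
    all_goals ring
  all_goals fun_prop

set_option maxHeartbeats 2000000 in
lemma G2_pos (k l : ℕ) (hk : k ≠ 0) (hl : l ≠ 0) :
    Gpair (psi k) (fun u => (starRingEnd ℂ) (psi l u)) = 0 := by
  have hπ : (Real.pi : ℂ) ≠ 0 := Complex.ofReal_ne_zero.mpr Real.pi_ne_zero
  have hkc : (k : ℂ) ≠ 0 := Nat.cast_ne_zero.mpr hk
  have hlc : (l : ℂ) ≠ 0 := Nat.cast_ne_zero.mpr hl
  have key : ∀ u : ℝ,
      dpsi k u * (starRingEnd ℂ) ((starRingEnd ℂ) (psi l u))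
        - psi k u * (starRingEnd ℂ) ((starRingEnd ℂ) (dpsi l u))
      = (-(Real.pi * k) * (-1) ^ l : ℂ) * ((Real.sin (Real.pi * k * u) : ℝ) : ℂ)
        + ((-1) ^ k * (Real.pi * l) : ℂ) * ((Real.sin (Real.pi * l * u) : ℝ) : ℂ)
        + (Complex.I * (-1) ^ l / 2) * ((Real.cos (Real.pi * k * u) : ℝ) : ℂ)
        + (-(Complex.I * (-1) ^ k / 2)) * ((Real.cos (Real.pi * l * u) : ℝ) : ℂ)
        + (-(Real.pi * k) + 1 / (4 * Real.pi * k) : ℂ)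
            * ((Real.sin (Real.pi * k * u) * Real.cos (Real.pi * l * u) : ℝ) : ℂ)
        + ((Real.pi * l) - 1 / (4 * Real.pi * l) : ℂ)
            * ((Real.sin (Real.pi * l * u) * Real.cos (Real.pi * k * u) : ℝ) : ℂ)
        + (Complex.I * (Real.pi * l / (2 * Real.pi * k) - Real.pi * k / (2 * Real.pi * l)))
            * ((Real.sin (Real.pi * k * u) * Real.sin (Real.pi * l * u) : ℝ) : ℂ)
        + 0 * ((1 : ℝ) : ℂ) := by
    intro u
    simp only [Complex.conj_conj, psi, dpsi, if_neg hk, if_neg hl]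
    push_cast
    ring_nf
    simp only [Complex.I_sq]
    field_simp
    all_goals ring
  rw [Gpair, deriv_psi k, deriv_conj_psi l]
  simp only [key]
  rw [combo8]
  · rw [N_sin k hk, N_sin l hl, N_cos k hk, N_cos l hl, N_sincos k l hk hl,
      N_sincos l k hl hk, N_sinsin k l hk hl]
    split_ifs with h
    · subst h
      push_cast
      field_simp
      simp
    · push_cast
      ring
  all_goals fun_prop

/-- The functions `ψ_k` form a complex orthonormal system for the pairing `𝔾`:
`𝔾(ψ_k, ψ_l) = δ_{kl}` and `𝔾(ψ_k, conj ψ_l) = 0`. -/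
theorem psi_orthonormal (k l : ℕ) :
    Gpair (psi k) (psi l) = (if k = l then 1 else 0) ∧
    Gpair (psi k) (fun u => (starRingEnd ℂ) (psi l u)) = 0 := by
  constructor
  · match k, l with
    | 0, 0 => simpa using G1_00
    | 0, (l+1) => simpa using G1_0l (l+1) (Nat.succ_ne_zero l)
    | (k+1), 0 => simpa using G1_k0 (k+1) (Nat.succ_ne_zero k)
    | (k+1), (l+1) => exact G1_pos (k+1) (l+1) (Nat.succ_ne_zero k) (Nat.succ_ne_zero l)
  · match k, l with
    | 0, 0 => exact G2_00
    | 0, (l+1) => exact G2_0l (l+1) (Nat.succ_ne_zero l)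
    | (k+1), 0 => exact G2_k0 (k+1) (Nat.succ_ne_zero k)
    | (k+1), (l+1) => exact G2_pos (k+1) (l+1) (Nat.succ_ne_zero k) (Nat.succ_ne_zero l)
end

section
/- For all X, Y ∈ C^∞([-1,1],ℝ): ∫_{-1}^{1} (X'(u)·Y(u) − Y'(u)·X(u)) du = 2i·Σ_{k=0}^{∞} ( conj(X̃(k))·Ỹ(k) − conj(Ỹ(k))·X̃(k) ), where the series on the right-hand side converges absolutely. -/
/-- The mode coefficients `X̃(k) := 𝔾(ψ_k, X)` of a real-valued function `X`. -/
noncomputable def modeCoeff (X : ℝ → ℝ) (k : ℕ) : ℂ :=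
  Gpair (psi k) (fun u => (X u : ℂ))


open MeasureTheory Set intervalIntegral Real


noncomputable def cosI (k : ℕ) (f : ℝ → ℝ) : ℝ :=
  ∫ u in (-1:ℝ)..1, f u * Real.cos (Real.pi * k * u)

noncomputable def sinI (k : ℕ) (f : ℝ → ℝ) : ℝ :=
  ∫ u in (-1:ℝ)..1, f u * Real.sin (Real.pi * k * u)

lemma contDeriv {X : ℝ → ℝ} (hX : ContDiff ℝ (⊤ : ℕ∞) X) : Continuous (deriv X) :=
  hX.continuous_deriv (by simp)

lemma hasDerivAtX {X : ℝ → ℝ} (hX : ContDiff ℝ (⊤ : ℕ∞) X) (x : ℝ) :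
    HasDerivAt X (deriv X x) x :=
  ((hX.differentiable (by simp)) x).hasDerivAt

lemma hasDerivAt_sinpk (k : ℕ) (x : ℝ) :
    HasDerivAt (fun u => Real.sin (Real.pi * k * u))
      (Real.pi * k * Real.cos (Real.pi * k * x)) x := by
  have hlin : HasDerivAt (fun u : ℝ => Real.pi * k * u) (Real.pi * k) x := by
    simpa using (hasDerivAt_id x).const_mul (Real.pi * (k:ℝ))
  simpa [mul_comm] using hlin.sin

lemma hasDerivAt_cospk (k : ℕ) (x : ℝ) :
    HasDerivAt (fun u => Real.cos (Real.pi * k * u))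
      (-(Real.pi * k * Real.sin (Real.pi * k * x))) x := by
  have hlin : HasDerivAt (fun u : ℝ => Real.pi * k * u) (Real.pi * k) x := by
    simpa using (hasDerivAt_id x).const_mul (Real.pi * (k:ℝ))
  simpa [mul_comm] using hlin.cos

lemma sin_pk_one (k : ℕ) : Real.sin (Real.pi * k * 1) = 0 := by
  simpa [mul_comm] using Real.sin_nat_mul_pi k

lemma sin_pk_negone (k : ℕ) : Real.sin (Real.pi * k * (-1)) = 0 := by
  have := Real.sin_int_mul_pi (-(k:ℤ))
  push_cast at this
  rw [show Real.pi * k * (-1) = -(k:ℝ) * Real.pi by ring]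
  exact this

lemma cos_pk_one (k : ℕ) : Real.cos (Real.pi * k * 1) = (-1:ℝ)^k := by
  rw [show Real.pi * k * 1 = (k:ℝ) * Real.pi by ring]
  simpa using Real.cos_nat_mul_pi_sub 0 k

lemma cos_pk_negone (k : ℕ) : Real.cos (Real.pi * k * (-1)) = (-1:ℝ)^k := by
  rw [show Real.pi * k * (-1) = -((k:ℝ) * Real.pi) by ring, Real.cos_neg]
  rw [show (k:ℝ) * Real.pi = Real.pi * k * 1 by ring]
  exact cos_pk_one k

-- ∫ X' = X 1 - X (-1)
lemma integral_deriv {X : ℝ → ℝ} (hX : ContDiff ℝ (⊤ : ℕ∞) X) :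
    (∫ u in (-1:ℝ)..1, deriv X u) = X 1 - X (-1) :=
  integral_eq_sub_of_hasDerivAt (fun x _ => hasDerivAtX hX x)
    ((contDeriv hX).intervalIntegrable _ _)

lemma sinI_deriv {X : ℝ → ℝ} (hX : ContDiff ℝ (⊤ : ℕ∞) X) (k : ℕ) :
    sinI k (deriv X) = -(Real.pi * k) * cosI k X := by
  have h := intervalIntegral.integral_mul_deriv_eq_deriv_mul
    (u := fun u => Real.sin (Real.pi * k * u)) (v := X)
    (u' := fun u => Real.pi * k * Real.cos (Real.pi * k * u)) (v' := deriv X)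
    (a := (-1:ℝ)) (b := 1)
    (fun x _ => hasDerivAt_sinpk k x)
    (fun x _ => hasDerivAtX hX x)
    (Continuous.intervalIntegrable (by fun_prop) _ _)
    ((contDeriv hX).intervalIntegrable _ _)
  simp only [sin_pk_one, sin_pk_negone, zero_mul, sub_zero, zero_sub] at h
  have e1 : sinI k (deriv X) = ∫ x in (-1:ℝ)..1,
      Real.sin (Real.pi * k * x) * deriv X x := by
    unfold sinI; congr 1; funext u; ring
  rw [e1, h]
  unfold cosI
  rw [← intervalIntegral.integral_const_mul, ← intervalIntegral.integral_neg]
  congr 1; funext x; ring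

lemma cosI_deriv {X : ℝ → ℝ} (hX : ContDiff ℝ (⊤ : ℕ∞) X) (k : ℕ) :
    cosI k (deriv X) = (-1:ℝ)^k * (X 1 - X (-1)) + (Real.pi * k) * sinI k X := by
  have h := intervalIntegral.integral_mul_deriv_eq_deriv_mul
    (u := fun u => Real.cos (Real.pi * k * u)) (v := X)
    (u' := fun u => -(Real.pi * k * Real.sin (Real.pi * k * u))) (v' := deriv X)
    (a := (-1:ℝ)) (b := 1)
    (fun x _ => hasDerivAt_cospk k x)
    (fun x _ => hasDerivAtX hX x)
    (Continuous.intervalIntegrable (by fun_prop) _ _)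
    ((contDeriv hX).intervalIntegrable _ _)
  simp only [cos_pk_one, cos_pk_negone] at h
  have e1 : cosI k (deriv X) = ∫ x in (-1:ℝ)..1,
      Real.cos (Real.pi * k * x) * deriv X x := by
    unfold cosI; congr 1; funext u; ring
  rw [e1, h]
  unfold sinI
  rw [show (∫ x in (-1:ℝ)..1, -(Real.pi * ↑k * Real.sin (Real.pi * ↑k * x)) * X x)
      = ∫ x in (-1:ℝ)..1, (-(Real.pi * k)) * (X x * Real.sin (Real.pi * k * x)) by
    congr 1; funext x; ring]
  rw [intervalIntegral.integral_const_mul]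
  ring



lemma deriv_psi_zero (u : ℝ) : deriv (psi 0) u = Complex.I / 2 := by
  have hfun : psi 0 = fun x : ℝ => 1 + Complex.I * (x:ℂ) / 2 := by
    funext x; simp [psi]
  rw [hfun]
  have h0 : HasDerivAt (fun x : ℝ => (x:ℂ)) 1 u := (hasDerivAt_id u).ofReal_comp
  have h1 := ((h0.const_mul Complex.I).div_const 2).const_add 1
  simp only [mul_one] at h1
  exact h1.deriv

lemma deriv_psi_succ (k : ℕ) (u : ℝ) :
    deriv (psi (k+1)) u =
      ((-(Real.pi * ((k+1:ℕ):ℝ) * Real.sin (Real.pi * ((k+1:ℕ):ℝ) * u)) : ℝ) : ℂ)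
      + (Complex.I / 2) * ((Real.cos (Real.pi * ((k+1:ℕ):ℝ) * u) : ℝ) : ℂ) := by
  have hπ1 : ((Real.pi : ℂ)) ≠ 0 := Complex.ofReal_ne_zero.mpr Real.pi_ne_zero
  have hκ : (((k+1:ℕ)):ℂ) ≠ 0 := Nat.cast_ne_zero.mpr (Nat.succ_ne_zero k)
  have hc := (hasDerivAt_cospk (k+1) u).ofReal_comp
  have hs := (((hasDerivAt_sinpk (k+1) u).ofReal_comp).const_mul Complex.I).div_const
      (2 * (Real.pi:ℂ) * ((k+1:ℕ):ℂ))
  have h2 := (hc.add hs).const_add ((-1:ℂ)^(k+1))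
  have e : (fun x : ℝ => ((-1:ℂ)^(k+1) + (((Real.cos (Real.pi * ((k+1:ℕ):ℝ) * x) : ℝ):ℂ)
      + Complex.I * ((Real.sin (Real.pi * ((k+1:ℕ):ℝ) * x) : ℝ):ℂ)
        / (2 * (Real.pi:ℂ) * ((k+1:ℕ):ℂ)))))
      = psi (k+1) := by
    funext x
    simp only [psi, if_neg (Nat.succ_ne_zero k)]
    ring
  simp only [Pi.add_apply] at h2
  rw [e] at h2
  rw [h2.deriv]
  have hcos : ((Real.pi * ((k+1:ℕ):ℝ) * Real.cos (Real.pi * ((k+1:ℕ):ℝ) * u) : ℝ) : ℂ)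
      = ((Real.pi:ℂ) * ((k+1:ℕ):ℂ)) * ((Real.cos (Real.pi * ((k+1:ℕ):ℝ) * u) : ℝ) : ℂ) := by
    push_cast; ring
  rw [hcos]
  have hd : (2 * (Real.pi:ℂ) * ((k+1:ℕ):ℂ)) ≠ 0 :=
    mul_ne_zero (mul_ne_zero two_ne_zero hπ1) hκ
  congr 1
  rw [div_eq_iff hd]
  ring


noncomputable def cosZ (n : ℤ) (f : ℝ → ℝ) : ℝ :=
  ∫ u in (-1:ℝ)..1, f u * Real.cos (Real.pi * n * u)
instance fact2 : Fact ((0:ℝ) < 2) := ⟨two_pos⟩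

lemma integral_comp_neg11 {E : Type*} [NormedAddCommGroup E] [NormedSpace ℝ E] (f : ℝ → E) :
    (∫ x in (-1:ℝ)..1, f (-x)) = ∫ x in (-1:ℝ)..1, f x := by
  simpa using intervalIntegral.integral_comp_neg (a := (-1:ℝ)) (b := 1) f

lemma odd_integral_zero {f : ℝ → ℝ} (hodd : ∀ x, f (-x) = - f x) :
    (∫ x in (-1:ℝ)..1, f x) = 0 := by
  have h := integral_comp_neg11 f
  have h2 : (∫ x in (-1:ℝ)..1, f (-x)) = ∫ x in (-1:ℝ)..1, -(f x) := by
    congr 1; funext x; exact hodd x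
  rw [h2, intervalIntegral.integral_neg] at h
  linarith

lemma cosZ_neg (n : ℤ) (f : ℝ → ℝ) : cosZ (-n) f = cosZ n f := by
  unfold cosZ
  congr 1; funext u
  push_cast
  rw [show Real.pi * (-(n:ℝ)) * u = -(Real.pi * n * u) by ring, Real.cos_neg]

lemma cosZ_natCast (k : ℕ) (f : ℝ → ℝ) : cosZ (k : ℤ) f = cosI k f := by
  unfold cosZ cosI
  norm_num

lemma cosZ_zero (f : ℝ → ℝ) : cosZ 0 f = ∫ u in (-1:ℝ)..1, f u := by
  unfold cosZ; congr 1; funext u; simp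

lemma liftIco_eval (F : ℝ → ℝ) (hFe : ∀ x, F (-x) = F x) :
    ∀ x ∈ Set.uIcc (-1:ℝ) 1,
      AddCircle.liftIco 2 (-1) (fun u => ((F u : ℝ) : ℂ)) ↑x = ((F x : ℝ) : ℂ) := by
  intro x hx
  rw [Set.uIcc_of_le (by norm_num : (-1:ℝ) ≤ 1)] at hx
  rcases eq_or_lt_of_le hx.2 with h1 | h1
  · rw [h1]
    have hcoe : ((1:ℝ) : AddCircle (2:ℝ)) = ((-1:ℝ) : AddCircle (2:ℝ)) := by
      have h := AddCircle.coe_add_period 2 (-1 : ℝ)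
      norm_num at h
      exact h
    rw [hcoe, AddCircle.liftIco_coe_apply (by norm_num : (-1:ℝ) ∈ Set.Ico (-1:ℝ) (-1+2))]
    norm_num [hFe 1]
  · exact AddCircle.liftIco_coe_apply ⟨hx.1, by linarith⟩

lemma fourierCoeff_liftIco_even (F : ℝ → ℝ) (hF : Continuous F) (hFe : ∀ x, F (-x) = F x)
    (n : ℤ) :
    fourierCoeff (AddCircle.liftIco 2 (-1) (fun u => ((F u : ℝ) : ℂ))) n
      = ((cosZ n F : ℝ) : ℂ) / 2 := by
  rw [fourierCoeff_eq_intervalIntegral _ n (-1)]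
  have hb : (-1:ℝ) + 2 = 1 := by norm_num
  rw [hb]
  have hcongr : Set.EqOn
      (fun x : ℝ => (fourier (-n) (x : AddCircle (2:ℝ)) : ℂ)
        • (AddCircle.liftIco 2 (-1) (fun u => ((F u : ℝ) : ℂ)) ↑x))
      (fun x : ℝ => ((F x * Real.cos (Real.pi * n * x) : ℝ) : ℂ)
        + ((-(F x * Real.sin (Real.pi * n * x)) : ℝ) : ℂ) * Complex.I)
      (Set.uIcc (-1:ℝ) 1) := by
    intro x hx
    simp only
    rw [liftIco_eval F hFe x hx, smul_eq_mul, fourier_coe_apply]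
    rw [show 2 * (Real.pi:ℂ) * Complex.I * ((-n : ℤ) : ℂ) * (x:ℂ) / ((2:ℝ):ℂ)
        = ((-(Real.pi * n * x) : ℝ) : ℂ) * Complex.I by push_cast; ring]
    rw [Complex.exp_mul_I, ← Complex.ofReal_cos, ← Complex.ofReal_sin,
      Real.cos_neg, Real.sin_neg]
    push_cast
    ring
  rw [intervalIntegral.integral_congr hcongr]
  have hi1 : IntervalIntegrable (fun x : ℝ => ((F x * Real.cos (Real.pi * n * x) : ℝ) : ℂ))
      MeasureTheory.volume (-1:ℝ) 1 := Continuous.intervalIntegrable (by fun_prop) _ _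
  have hi2 : IntervalIntegrable
      (fun x : ℝ => ((-(F x * Real.sin (Real.pi * n * x)) : ℝ) : ℂ) * Complex.I)
      MeasureTheory.volume (-1:ℝ) 1 := Continuous.intervalIntegrable (by fun_prop) _ _
  rw [intervalIntegral.integral_add hi1 hi2, intervalIntegral.integral_mul_const,
    intervalIntegral.integral_ofReal, intervalIntegral.integral_ofReal]
  have hzero : (∫ x in (-1:ℝ)..1, -(F x * Real.sin (Real.pi * n * x))) = 0 := by
    refine odd_integral_zero (fun x => ?_)
    rw [hFe x, show Real.pi * (n:ℝ) * (-x) = -(Real.pi * n * x) by ring, Real.sin_neg]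
    ring
  rw [hzero]
  unfold cosZ
  push_cast
  rw [Complex.real_smul]
  push_cast
  ring

open ContinuousMap in
lemma hasSum_even_parseval (F G : ℝ → ℝ) (hF : Continuous F) (hG : Continuous G)
    (hFe : ∀ x, F (-x) = F x) (hGe : ∀ x, G (-x) = G x) :
    HasSum (fun n : ℤ => (cosZ n F / 2) * (cosZ n G / 2))
      ((∫ u in (-1:ℝ)..1, F u * G u) / 2) := by
  have hFcont : Continuous (AddCircle.liftIco 2 (-1) (fun u => ((F u : ℝ) : ℂ))) := by
    refine AddCircle.liftIco_continuous ?_ ?_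
    · norm_num [hFe 1]
    · exact (Complex.continuous_ofReal.comp hF).continuousOn
  have hGcont : Continuous (AddCircle.liftIco 2 (-1) (fun u => ((G u : ℝ) : ℂ))) := by
    refine AddCircle.liftIco_continuous ?_ ?_
    · norm_num [hGe 1]
    · exact (Complex.continuous_ofReal.comp hG).continuousOn
  set CF : C(AddCircle (2:ℝ), ℂ) := ⟨_, hFcont⟩ with hCF
  set CG : C(AddCircle (2:ℝ), ℂ) := ⟨_, hGcont⟩ with hCG
  set xF := toLp (E := ℂ) 2 AddCircle.haarAddCircle ℂ CF with hxF
  set xG := toLp (E := ℂ) 2 AddCircle.haarAddCircle ℂ CG with hxG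
  have hsum := fourierBasis (T := 2).hasSum_inner_mul_inner xF xG
  -- identify coefficients
  have hrepr : ∀ (i : ℤ),
      (inner ℂ xF (fourierBasis (T := 2) i) : ℂ) * inner ℂ (fourierBasis (T := 2) i) xG
        = ((cosZ i F / 2 * (cosZ i G / 2) : ℝ) : ℂ) := by
    intro i
    have h1 : (inner ℂ (fourierBasis (T := 2) i) xG : ℂ)
        = fourierBasis (T := 2).repr xG i :=
      (fourierBasis (T := 2).repr_apply_apply xG i).symm
    have h1' : (inner ℂ (fourierBasis (T := 2) i) xF : ℂ)
        = fourierBasis (T := 2).repr xF i :=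
      (fourierBasis (T := 2).repr_apply_apply xF i).symm
    have h2 : fourierBasis (T := 2).repr xG i = ((cosZ i G : ℝ) : ℂ) / 2 := by
      rw [fourierBasis_repr, hxG, fourierCoeff_toLp]
      exact fourierCoeff_liftIco_even G hG hGe i
    have h2' : fourierBasis (T := 2).repr xF i = ((cosZ i F : ℝ) : ℂ) / 2 := by
      rw [fourierBasis_repr, hxF, fourierCoeff_toLp]
      exact fourierCoeff_liftIco_even F hF hFe i
    have h3 : (inner ℂ xF (fourierBasis (T := 2) i) : ℂ)
        = (starRingEnd ℂ) (((cosZ i F : ℝ) : ℂ) / 2) := by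
      rw [← inner_conj_symm, h1', h2']
    rw [h3, h1, h2]
    simp only [map_div₀, Complex.conj_ofReal, map_ofNat]
    push_cast
    ring
  rw [show (fun i : ℤ => (inner ℂ xF (fourierBasis (T := 2) i) : ℂ)
      * inner ℂ (fourierBasis (T := 2) i) xG)
    = fun i : ℤ => ((cosZ i F / 2 * (cosZ i G / 2) : ℝ) : ℂ) from funext hrepr] at hsum
  -- identify inner product
  have hinner : (inner ℂ xF xG : ℂ) = (((∫ u in (-1:ℝ)..1, F u * G u) / 2 : ℝ) : ℂ) := by
    rw [MeasureTheory.L2.inner_def]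
    have hae : ∀ᵐ t ∂(AddCircle.haarAddCircle :
        MeasureTheory.Measure (AddCircle (2:ℝ))),
        (inner ℂ (xF t) (xG t) : ℂ)
          = AddCircle.liftIco 2 (-1) (fun u => ((F u * G u : ℝ) : ℂ)) t := by
      filter_upwards [ContinuousMap.coeFn_toLp (p := 2)
          (μ := AddCircle.haarAddCircle) (𝕜 := ℂ) CF,
        ContinuousMap.coeFn_toLp (p := 2)
          (μ := AddCircle.haarAddCircle) (𝕜 := ℂ) CG] with t h1 h2
      rw [RCLike.inner_apply', h1, h2]
      show (starRingEnd ℂ) (AddCircle.liftIco 2 (-1) (fun u => ((F u : ℝ) : ℂ)) t)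
        * AddCircle.liftIco 2 (-1) (fun u => ((G u : ℝ) : ℂ)) t = _
      unfold AddCircle.liftIco
      simp only [Function.comp_apply, Set.restrict_apply]
      rw [Complex.conj_ofReal]
      push_cast
      ring
    rw [MeasureTheory.integral_congr_ae hae]
    have h0 := fourierCoeff_liftIco_even (fun u => F u * G u) (hF.mul hG)
      (fun x => by show F (-x) * G (-x) = F x * G x; rw [hFe, hGe]) 0
    have h0' : fourierCoeff
        (AddCircle.liftIco 2 (-1) (fun u => ((F u * G u : ℝ) : ℂ))) 0
        = ∫ t, AddCircle.liftIco 2 (-1) (fun u => ((F u * G u : ℝ) : ℂ)) t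
            ∂(AddCircle.haarAddCircle : MeasureTheory.Measure (AddCircle (2:ℝ))) := by
      unfold fourierCoeff
      simp [fourier_zero]
    rw [← h0', h0, cosZ_zero]
    push_cast
    ring
  rw [hinner] at hsum
  exact Complex.hasSum_ofReal.mp (by exact_mod_cast hsum)

lemma cos_even_arg (k : ℕ) (x : ℝ) :
    Real.cos (Real.pi * k * (-x)) = Real.cos (Real.pi * k * x) := by
  rw [show Real.pi * k * (-x) = -(Real.pi * k * x) by ring, Real.cos_neg]

lemma cosI_even_part (f : ℝ → ℝ) (hf : Continuous f) (k : ℕ) :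
    cosI k (fun u => (f u + f (-u))/2) = cosI k f := by
  unfold cosI
  have hsub := integral_comp_neg11 (fun u => f u * Real.cos (Real.pi * k * u))
  have hsub2 : (∫ x in (-1:ℝ)..1, f (-x) * Real.cos (Real.pi * k * x))
      = ∫ x in (-1:ℝ)..1, f x * Real.cos (Real.pi * k * x) := by
    rw [← hsub]
    congr 1; funext x
    rw [cos_even_arg]
  have hi1 : IntervalIntegrable (fun u : ℝ => f u * Real.cos (Real.pi * k * u))
      MeasureTheory.volume (-1:ℝ) 1 := Continuous.intervalIntegrable (by fun_prop) _ _
  have hi2 : IntervalIntegrable (fun u : ℝ => f (-u) * Real.cos (Real.pi * k * u))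
      MeasureTheory.volume (-1:ℝ) 1 := Continuous.intervalIntegrable (by fun_prop) _ _
  have hexp : (∫ u in (-1:ℝ)..1, (fun u => (f u + f (-u))/2) u * Real.cos (Real.pi * k * u))
      = ∫ u in (-1:ℝ)..1, ((1/2) * (f u * Real.cos (Real.pi * k * u))
          + (1/2) * (f (-u) * Real.cos (Real.pi * k * u))) := by
    congr 1; funext u; ring
  rw [hexp, intervalIntegral.integral_add (by exact (hi1.const_mul _))
    (by exact (hi2.const_mul _)), intervalIntegral.integral_const_mul,
    intervalIntegral.integral_const_mul, hsub2]
  ring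

lemma integral_even_part (f : ℝ → ℝ) (hf : Continuous f) :
    (∫ u in (-1:ℝ)..1, (f u + f (-u))/2) = ∫ u in (-1:ℝ)..1, f u := by
  have hsub := integral_comp_neg11 f
  have hi1 : IntervalIntegrable f MeasureTheory.volume (-1:ℝ) 1 :=
    Continuous.intervalIntegrable hf _ _
  have hi2 : IntervalIntegrable (fun u : ℝ => f (-u)) MeasureTheory.volume (-1:ℝ) 1 :=
    Continuous.intervalIntegrable (by fun_prop) _ _
  have hexp : (∫ u in (-1:ℝ)..1, (f u + f (-u))/2)
      = ∫ u in (-1:ℝ)..1, ((1/2) * f u + (1/2) * f (-u)) := by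
    congr 1; funext u; ring
  rw [hexp, intervalIntegral.integral_add (by exact hi1.const_mul _)
    (by exact hi2.const_mul _), intervalIntegral.integral_const_mul,
    intervalIntegral.integral_const_mul, hsub]
  ring

lemma hasSum_cosI (f g : ℝ → ℝ) (hf : Continuous f) (hg : Continuous g) :
    HasSum (fun k : ℕ => cosI (k+1) f * cosI (k+1) g)
      ((∫ u in (-1:ℝ)..1, ((f u + f (-u))/2) * ((g u + g (-u))/2))
        - (∫ u in (-1:ℝ)..1, f u) * (∫ u in (-1:ℝ)..1, g u) / 2) := by
  have hFc : Continuous (fun u : ℝ => (f u + f (-u))/2) := by fun_prop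
  have hGc : Continuous (fun u : ℝ => (g u + g (-u))/2) := by fun_prop
  have hFe : ∀ x : ℝ, (f (-x) + f (-(-x)))/2 = (f x + f (-x))/2 := fun x => by
    rw [neg_neg]; ring
  have hGe : ∀ x : ℝ, (g (-x) + g (-(-x)))/2 = (g x + g (-x))/2 := fun x => by
    rw [neg_neg]; ring
  have h := hasSum_even_parseval (fun u => (f u + f (-u))/2) (fun u => (g u + g (-u))/2)
    hFc hGc hFe hGe
  set φ : ℤ → ℝ := fun n => cosZ n (fun u => (f u + f (-u))/2) / 2
    * (cosZ n (fun u => (g u + g (-u))/2) / 2) with hφ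
  have hsummable : Summable φ := h.summable
  have hinj : Function.Injective (fun k : ℕ => (k:ℤ)+1) := fun a b hab => by
    simpa using hab
  have hs1 : Summable (fun k : ℕ => φ ((k:ℤ)+1)) := hsummable.comp_injective hinj
  have hs : HasSum (fun k : ℕ => φ ((k:ℤ)+1)) (∑' k : ℕ, φ ((k:ℤ)+1)) := hs1.hasSum
  have hsymm : (fun k : ℕ => φ (-((k:ℤ)+1))) = fun k : ℕ => φ ((k:ℤ)+1) := by
    funext k
    rw [hφ]
    simp only
    rw [show -((k:ℤ)+1) = -(((k:ℤ)+1)) from rfl, cosZ_neg, cosZ_neg]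
  have hs2 : HasSum (fun k : ℕ => φ (-((k:ℤ)+1))) (∑' k : ℕ, φ ((k:ℤ)+1)) := by
    rw [hsymm]; exact hs
  have htot := HasSum.of_add_one_of_neg_add_one hs hs2
  have huniq := h.unique htot
  have hphi0 : φ 0 = (∫ u in (-1:ℝ)..1, f u) * (∫ u in (-1:ℝ)..1, g u) / 4 := by
    rw [hφ]
    simp only
    rw [cosZ_zero, cosZ_zero, integral_even_part f hf, integral_even_part g hg]
    ring
  have h4 : (fun k : ℕ => cosI (k+1) f * cosI (k+1) g)
      = fun k : ℕ => 4 * φ ((k:ℤ)+1) := by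
    funext k
    rw [hφ]
    simp only
    rw [show ((k:ℤ)+1) = ((k+1 : ℕ) : ℤ) by push_cast; ring, cosZ_natCast, cosZ_natCast,
      cosI_even_part f hf, cosI_even_part g hg]
    ring
  rw [h4]
  have hfinal := hs.mul_left 4
  convert hfinal using 1
  · rfl
  have : (∫ u in (-1:ℝ)..1, ((f u + f (-u))/2) * ((g u + g (-u))/2))/2
      = (∑' k : ℕ, φ ((k:ℤ)+1)) + φ 0 + (∑' k : ℕ, φ ((k:ℤ)+1)) := huniq
  rw [hphi0] at this
  linarith

lemma deriv_ofReal_comp {X : ℝ → ℝ} (hX : ContDiff ℝ (⊤ : ℕ∞) X) (u : ℝ) :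
    deriv (fun v : ℝ => ((X v : ℝ) : ℂ)) u = ((deriv X u : ℝ) : ℂ) :=
  ((hasDerivAtX hX u).ofReal_comp).deriv

lemma modeCoeff_succ (X : ℝ → ℝ) (hX : ContDiff ℝ (⊤ : ℕ∞) X) (k : ℕ) :
    modeCoeff X (k+1)
      = ((cosI (k+1) X / 2 : ℝ) : ℂ) + ((cosI (k+1) (deriv X) : ℝ) : ℂ) * Complex.I := by
  have hXc : Continuous X := hX.continuous
  have hXd : Continuous (deriv X) := contDeriv hX
  have hπ : Real.pi * ((k+1:ℕ):ℝ) ≠ 0 :=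
    mul_ne_zero Real.pi_ne_zero (Nat.cast_ne_zero.mpr (Nat.succ_ne_zero k))
  set r : ℝ → ℝ := fun u => (-(Real.pi * ((k+1:ℕ):ℝ))) * (X u * Real.sin (Real.pi * ((k+1:ℕ):ℝ) * u))
    + ((-((-1:ℝ)^(k+1))) * deriv X u + (-1) * (deriv X u * Real.cos (Real.pi * ((k+1:ℕ):ℝ) * u)))
    with hr_def
  set s : ℝ → ℝ := fun u => (1/2) * (X u * Real.cos (Real.pi * ((k+1:ℕ):ℝ) * u))
    + (-(1/(2 * Real.pi * ((k+1:ℕ):ℝ)))) * (deriv X u * Real.sin (Real.pi * ((k+1:ℕ):ℝ) * u))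
    with hs_def
  have hrc : Continuous r := by fun_prop
  have hsc : Continuous s := by fun_prop
  have hint : ∀ u ∈ Set.uIcc (-1:ℝ) 1,
      deriv (psi (k+1)) u * (starRingEnd ℂ) ((fun v : ℝ => ((X v : ℝ):ℂ)) u)
        - psi (k+1) u * (starRingEnd ℂ) (deriv (fun v : ℝ => ((X v : ℝ):ℂ)) u)
      = ((r u : ℝ) : ℂ) + ((s u : ℝ) : ℂ) * Complex.I := by
    intro u _
    rw [deriv_psi_succ, deriv_ofReal_comp hX]
    simp only [psi, if_neg (Nat.succ_ne_zero k), Complex.conj_ofReal, hr_def, hs_def]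
    have hd2 : (2 * (Real.pi:ℂ) * (((k+1:ℕ)):ℂ)) ≠ 0 := by
      refine mul_ne_zero (mul_ne_zero two_ne_zero ?_) ?_
      · exact Complex.ofReal_ne_zero.mpr Real.pi_ne_zero
      · exact Nat.cast_ne_zero.mpr (Nat.succ_ne_zero k)
    push_cast
    field_simp
    ring
  unfold modeCoeff Gpair
  rw [intervalIntegral.integral_congr hint]
  have hi1 : IntervalIntegrable (fun u : ℝ => ((r u : ℝ):ℂ)) MeasureTheory.volume (-1:ℝ) 1 :=
    Continuous.intervalIntegrable (by fun_prop) _ _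
  have hi2 : IntervalIntegrable (fun u : ℝ => ((s u : ℝ):ℂ) * Complex.I)
      MeasureTheory.volume (-1:ℝ) 1 :=
    Continuous.intervalIntegrable (by fun_prop) _ _
  rw [intervalIntegral.integral_add hi1 hi2]
  rw [intervalIntegral.integral_mul_const, intervalIntegral.integral_ofReal,
    intervalIntegral.integral_ofReal]
  have hr : (∫ u in (-1:ℝ)..1, r u)
      = -2 * cosI (k+1) (deriv X) := by
    rw [hr_def]
    rw [intervalIntegral.integral_add (Continuous.intervalIntegrable (by fun_prop) _ _)
        (Continuous.intervalIntegrable (by fun_prop) _ _),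
      intervalIntegral.integral_add (Continuous.intervalIntegrable (by fun_prop) _ _)
        (Continuous.intervalIntegrable (by fun_prop) _ _),
      intervalIntegral.integral_const_mul, intervalIntegral.integral_const_mul,
      intervalIntegral.integral_const_mul, integral_deriv hX]
    have h1 := sinI_deriv hX (k+1)
    have h2 := cosI_deriv hX (k+1)
    simp only [sinI, cosI] at h1 h2 ⊢
    push_cast at h1 h2 ⊢
    linarith
  have hs : (∫ u in (-1:ℝ)..1, s u) = cosI (k+1) X := by
    rw [hs_def]
    rw [intervalIntegral.integral_add (Continuous.intervalIntegrable (by fun_prop) _ _)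
        (Continuous.intervalIntegrable (by fun_prop) _ _),
      intervalIntegral.integral_const_mul, intervalIntegral.integral_const_mul]
    have h1 := sinI_deriv hX (k+1)
    simp only [sinI, cosI] at h1 ⊢
    have hπ2 : (2 * Real.pi * ((k+1:ℕ):ℝ)) ≠ 0 := by
      have : (0:ℝ) < ((k+1:ℕ):ℝ) := by positivity
      positivity
    push_cast at h1 hπ2 ⊢
    field_simp
    linarith
  rw [hr, hs]
  push_cast
  linear_combination ((-(cosI (k+1) X : ℂ))/2) * Complex.I_mul_I

lemma integral_id_mul_deriv {X : ℝ → ℝ} (hX : ContDiff ℝ (⊤ : ℕ∞) X) :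
    (∫ u in (-1:ℝ)..1, u * deriv X u)
      = (X 1 + X (-1)) - ∫ u in (-1:ℝ)..1, X u := by
  have hXc : Continuous X := hX.continuous
  have hXd : Continuous (deriv X) := contDeriv hX
  have h := intervalIntegral.integral_mul_deriv_eq_deriv_mul
    (u := fun u : ℝ => u) (v := X) (u' := fun _ => (1:ℝ)) (v' := deriv X)
    (a := (-1:ℝ)) (b := 1)
    (fun x _ => hasDerivAt_id x)
    (fun x _ => hasDerivAtX hX x)
    (Continuous.intervalIntegrable (by fun_prop) _ _)
    (Continuous.intervalIntegrable (by fun_prop) _ _)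
  simp only [one_mul] at h
  rw [h]; ring

lemma modeCoeff_zero (X : ℝ → ℝ) (hX : ContDiff ℝ (⊤ : ℕ∞) X) :
    modeCoeff X 0
      = (((∫ u in (-1:ℝ)..1, X u) / 2 - (X 1 + X (-1)) / 4 : ℝ) : ℂ)
        + (((X 1 - X (-1)) / 2 : ℝ) : ℂ) * Complex.I := by
  have hXc : Continuous X := hX.continuous
  have hXd : Continuous (deriv X) := contDeriv hX
  set r : ℝ → ℝ := fun u => (-1) * deriv X u with hr_def
  set s : ℝ → ℝ := fun u => (1/2) * X u + (-(1/2)) * (u * deriv X u) with hs_def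
  have hint : ∀ u ∈ Set.uIcc (-1:ℝ) 1,
      deriv (psi 0) u * (starRingEnd ℂ) ((fun v : ℝ => ((X v : ℝ):ℂ)) u)
        - psi 0 u * (starRingEnd ℂ) (deriv (fun v : ℝ => ((X v : ℝ):ℂ)) u)
      = ((r u : ℝ) : ℂ) + ((s u : ℝ) : ℂ) * Complex.I := by
    intro u _
    rw [deriv_psi_zero, deriv_ofReal_comp hX]
    simp only [psi, if_pos rfl, Complex.conj_ofReal, hr_def, hs_def]
    push_cast
    ring
  unfold modeCoeff Gpair
  rw [intervalIntegral.integral_congr hint]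
  have hi1 : IntervalIntegrable (fun u : ℝ => ((r u : ℝ):ℂ)) MeasureTheory.volume (-1:ℝ) 1 :=
    Continuous.intervalIntegrable (by fun_prop) _ _
  have hi2 : IntervalIntegrable (fun u : ℝ => ((s u : ℝ):ℂ) * Complex.I)
      MeasureTheory.volume (-1:ℝ) 1 :=
    Continuous.intervalIntegrable (by fun_prop) _ _
  rw [intervalIntegral.integral_add hi1 hi2]
  rw [intervalIntegral.integral_mul_const, intervalIntegral.integral_ofReal,
    intervalIntegral.integral_ofReal]
  have hr : (∫ u in (-1:ℝ)..1, r u) = -(X 1 - X (-1)) := by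
    rw [hr_def]
    rw [intervalIntegral.integral_const_mul, integral_deriv hX]
    ring
  have hs : (∫ u in (-1:ℝ)..1, s u)
      = (∫ u in (-1:ℝ)..1, X u) - (X 1 + X (-1))/2 := by
    rw [hs_def]
    rw [intervalIntegral.integral_add (Continuous.intervalIntegrable (by fun_prop) _ _)
        (Continuous.intervalIntegrable (by fun_prop) _ _),
      intervalIntegral.integral_const_mul, intervalIntegral.integral_const_mul,
      integral_id_mul_deriv hX]
    ring
  rw [hr, hs]
  push_cast
  linear_combination ((-(∫ u in (-1:ℝ)..1, X u) + (X 1 + X (-1))/2)/2 : ℂ) * Complex.I_mul_I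

lemma integral_cross {X Y : ℝ → ℝ} (hX : ContDiff ℝ (⊤ : ℕ∞) X) (hY : ContDiff ℝ (⊤ : ℕ∞) Y) :
    (∫ u in (-1:ℝ)..1, deriv X u * Y (-u)) - (∫ u in (-1:ℝ)..1, X u * deriv Y (-u))
      = X 1 * Y (-1) - X (-1) * Y 1 := by
  have hXc := hX.continuous
  have hYc := hY.continuous
  have hXd := contDeriv hX
  have hYd := contDeriv hY
  have hder : ∀ u : ℝ, HasDerivAt (fun v => X v * Y (-v))
      (deriv X u * Y (-u) - X u * deriv Y (-u)) u := by
    intro u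
    have hYn : HasDerivAt (fun v : ℝ => Y (-v)) (-(deriv Y (-u))) u := by
      have h := (hasDerivAtX hY (-u)).comp u (hasDerivAt_neg u)
      simpa [Function.comp_def] using h
    have h2 := (hasDerivAtX hX u).mul hYn
    exact h2.congr_deriv (by ring)
  have h := integral_eq_sub_of_hasDerivAt (f := fun v => X v * Y (-v)) (a := (-1:ℝ)) (b := 1)
    (fun x _ => hder x) (Continuous.intervalIntegrable (by fun_prop) _ _)
  rw [intervalIntegral.integral_sub (Continuous.intervalIntegrable (by fun_prop) _ _)
    (Continuous.intervalIntegrable (by fun_prop) _ _)] at h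
  simpa using h

lemma J_expand {f g : ℝ → ℝ} (hf : Continuous f) (hg : Continuous g) :
    (∫ u in (-1:ℝ)..1, ((f u + f (-u))/2) * ((g u + g (-u))/2))
      = ((∫ u in (-1:ℝ)..1, f u * g u) + (∫ u in (-1:ℝ)..1, f u * g (-u)))/2 := by
  have hsub1 : (∫ u in (-1:ℝ)..1, f (-u) * g u) = ∫ u in (-1:ℝ)..1, f u * g (-u) := by
    have h := integral_comp_neg11 (fun u => f u * g (-u))
    rw [← h]
    congr 1; funext x; rw [neg_neg]
  have hsub2 : (∫ u in (-1:ℝ)..1, f (-u) * g (-u)) = ∫ u in (-1:ℝ)..1, f u * g u := by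
    have h := integral_comp_neg11 (fun u => f u * g u)
    rw [← h]
  have hexp : (∫ u in (-1:ℝ)..1, ((f u + f (-u))/2) * ((g u + g (-u))/2))
      = ∫ u in (-1:ℝ)..1, ((1/4) * (f u * g u) + (1/4) * (f u * g (-u)))
          + ((1/4) * (f (-u) * g u) + (1/4) * (f (-u) * g (-u))) := by
    congr 1; funext u; ring
  rw [hexp]
  rw [intervalIntegral.integral_add (Continuous.intervalIntegrable (by fun_prop) _ _)
    (Continuous.intervalIntegrable (by fun_prop) _ _),
    intervalIntegral.integral_add (Continuous.intervalIntegrable (by fun_prop) _ _)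
    (Continuous.intervalIntegrable (by fun_prop) _ _),
    intervalIntegral.integral_add (Continuous.intervalIntegrable (by fun_prop) _ _)
    (Continuous.intervalIntegrable (by fun_prop) _ _),
    intervalIntegral.integral_const_mul, intervalIntegral.integral_const_mul,
    intervalIntegral.integral_const_mul, intervalIntegral.integral_const_mul,
    hsub1, hsub2]
  ring


lemma cast_neg_two_eq (a b : ℝ) :
    ((-2 * (a + b) : ℝ) : ℂ)
      = 2 * Complex.I * ((a : ℂ) * Complex.I + (b : ℂ) * Complex.I) := by
  push_cast
  linear_combination (-2*((a:ℂ)+b)) * Complex.I_sq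

/-- For all smooth `X, Y : [-1,1] → ℝ`:
`∫_{-1}^{1} (X'·Y − Y'·X) du = 2i·Σ_{k=0}^{∞} (conj(X̃(k))·Ỹ(k) − conj(Ỹ(k))·X̃(k))`,
the series on the right-hand side converging absolutely. -/
theorem integral_eq_mode_sum (X Y : ℝ → ℝ) (hX : ContDiff ℝ (⊤ : ℕ∞) X) (hY : ContDiff ℝ (⊤ : ℕ∞) Y) :
    Summable (fun k : ℕ =>
      ‖(starRingEnd ℂ) (modeCoeff X k) * modeCoeff Y k
        - (starRingEnd ℂ) (modeCoeff Y k) * modeCoeff X k‖) ∧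
    ((∫ u in (-1 : ℝ)..1, (deriv X u * Y u - deriv Y u * X u) : ℝ) : ℂ) =
      2 * Complex.I * ∑' k : ℕ,
        ((starRingEnd ℂ) (modeCoeff X k) * modeCoeff Y k
          - (starRingEnd ℂ) (modeCoeff Y k) * modeCoeff X k) := by
  have hXc : Continuous X := hX.continuous
  have hYc : Continuous Y := hY.continuous
  have hXd : Continuous (deriv X) := contDeriv hX
  have hYd : Continuous (deriv Y) := contDeriv hY
  set t : ℕ → ℂ := fun k =>
    (starRingEnd ℂ) (modeCoeff X k) * modeCoeff Y k
      - (starRingEnd ℂ) (modeCoeff Y k) * modeCoeff X k with ht_def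
  have htk : ∀ k : ℕ, t (k+1) =
      ((cosI (k+1) X * cosI (k+1) (deriv Y)
        - cosI (k+1) (deriv X) * cosI (k+1) Y : ℝ) : ℂ) * Complex.I := by
    intro k
    rw [ht_def]
    simp only
    rw [modeCoeff_succ X hX k, modeCoeff_succ Y hY k]
    simp only [map_add, map_mul, Complex.conj_ofReal, Complex.conj_I]
    push_cast
    ring
  have ht0 : t 0 =
      ((2 * ((((∫ u in (-1:ℝ)..1, X u)/2 - (X 1 + X (-1))/4) * ((Y 1 - Y (-1))/2))
        - (((X 1 - X (-1))/2) * ((∫ u in (-1:ℝ)..1, Y u)/2 - (Y 1 + Y (-1))/4))) : ℝ) : ℂ)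
        * Complex.I := by
    rw [ht_def]
    simp only
    rw [modeCoeff_zero X hX, modeCoeff_zero Y hY]
    simp only [map_add, map_mul, Complex.conj_ofReal, Complex.conj_I]
    push_cast
    ring
  -- summability
  have hsqX := (hasSum_cosI X X hXc hXc).summable
  have hsqY := (hasSum_cosI Y Y hYc hYc).summable
  have hsqX' := (hasSum_cosI (deriv X) (deriv X) hXd hXd).summable
  have hsqY' := (hasSum_cosI (deriv Y) (deriv Y) hYd hYd).summable
  have hmaj := (((hsqX.add hsqY').add (hsqX'.add hsqY)).div_const 2)
  have hbound : ∀ k : ℕ, ‖t (k+1)‖ ≤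
      ((cosI (k+1) X * cosI (k+1) X + cosI (k+1) (deriv Y) * cosI (k+1) (deriv Y))
        + (cosI (k+1) (deriv X) * cosI (k+1) (deriv X) + cosI (k+1) Y * cosI (k+1) Y))/2 := by
    intro k
    rw [htk k]
    rw [norm_mul, Complex.norm_I, mul_one, Complex.norm_real, Real.norm_eq_abs]
    rw [abs_le]
    constructor
    · nlinarith [sq_nonneg (cosI (k+1) X + cosI (k+1) (deriv Y)),
        sq_nonneg (cosI (k+1) (deriv X) - cosI (k+1) Y)]
    · nlinarith [sq_nonneg (cosI (k+1) X - cosI (k+1) (deriv Y)),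
        sq_nonneg (cosI (k+1) (deriv X) + cosI (k+1) Y)]
  have hsn1 : Summable (fun k : ℕ => ‖t (k+1)‖) :=
    Summable.of_nonneg_of_le (fun k => norm_nonneg _) hbound hmaj
  have hsn : Summable (fun k : ℕ => ‖t k‖) := (summable_nat_add_iff 1).1 hsn1
  refine ⟨hsn, ?_⟩
  have hts : Summable t := hsn.of_norm
  -- series values
  have h1 := hasSum_cosI X (deriv Y) hXc hYd
  have h2 := hasSum_cosI (deriv X) Y hXd hYc
  have hdiff := h1.sub h2
  have hTsucc : HasSum (fun k : ℕ => t (k+1))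
      (((((∫ u in (-1:ℝ)..1, ((X u + X (-u))/2) * ((deriv Y u + deriv Y (-u))/2))
          - (∫ u in (-1:ℝ)..1, X u) * (∫ u in (-1:ℝ)..1, deriv Y u) / 2)
        - ((∫ u in (-1:ℝ)..1, ((deriv X u + deriv X (-u))/2) * ((Y u + Y (-u))/2))
          - (∫ u in (-1:ℝ)..1, deriv X u) * (∫ u in (-1:ℝ)..1, Y u) / 2) : ℝ) : ℂ)
        * Complex.I) := by
    have hc := (Complex.hasSum_ofReal.mpr hdiff).mul_right Complex.I
    refine HasSum.congr_fun hc ?_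
    intro k
    rw [htk k]
  rw [hts.tsum_eq_zero_add, ht0, hTsucc.tsum_eq]
  -- final computation
  have hsplit : (∫ u in (-1:ℝ)..1, (deriv X u * Y u - deriv Y u * X u))
      = (∫ u in (-1:ℝ)..1, deriv X u * Y u) - (∫ u in (-1:ℝ)..1, X u * deriv Y u) := by
    rw [intervalIntegral.integral_sub (Continuous.intervalIntegrable (by fun_prop) _ _)
      (Continuous.intervalIntegrable (by fun_prop) _ _)]
    congr 1
    congr 1; funext u; ring
  have hJ1 := J_expand hXc hYd
  have hJ2 := J_expand hXd hYc
  have hN := integral_cross hX hY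
  have hDX := integral_deriv hX
  have hDY := integral_deriv hY
  have hreal : (∫ u in (-1:ℝ)..1, deriv X u * Y u) - (∫ u in (-1:ℝ)..1, X u * deriv Y u)
      = -2 * ((2 * ((((∫ u in (-1:ℝ)..1, X u)/2 - (X 1 + X (-1))/4) * ((Y 1 - Y (-1))/2))
          - (((X 1 - X (-1))/2) * ((∫ u in (-1:ℝ)..1, Y u)/2 - (Y 1 + Y (-1))/4))))
        + ((((∫ u in (-1:ℝ)..1, ((X u + X (-u))/2) * ((deriv Y u + deriv Y (-u))/2))
            - (∫ u in (-1:ℝ)..1, X u) * (∫ u in (-1:ℝ)..1, deriv Y u) / 2)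
          - ((∫ u in (-1:ℝ)..1, ((deriv X u + deriv X (-u))/2) * ((Y u + Y (-u))/2))
            - (∫ u in (-1:ℝ)..1, deriv X u) * (∫ u in (-1:ℝ)..1, Y u) / 2)))) := by
    linear_combination 2 * hJ1 - 2 * hJ2 - hN
      + (∫ u in (-1:ℝ)..1, Y u) * hDX - (∫ u in (-1:ℝ)..1, X u) * hDY
  rw [hsplit, hreal]
  exact cast_neg_two_eq _ _
end

section
/- Let H be a topological group and N ⊆ H a normal subgroup equipped with the subspace topology. If h ∈ N and g lies in the path component of the identity of H, then the commutator h·g·h⁻¹·g⁻¹ belongs to N and, moreover, lies in the path component of the identity of N. -/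
/-- If `N` is a normal subgroup of a topological group `H`, `h ∈ N`, and `g` lies
in the path component of the identity of `H`, then the commutator `h·g·h⁻¹·g⁻¹`
belongs to `N` and lies in the path component of the identity of `N` (with the
subspace topology). -/
theorem commutator_mem_pathComponent_one_of_normal
    (H : Type*) [TopologicalSpace H] [Group H] [IsTopologicalGroup H]
    (N : Subgroup H) (hN : N.Normal) (h g : H)
    (hh : h ∈ N) (hg : g ∈ pathComponent (1 : H)) :
    ∃ hmem : h * g * h⁻¹ * g⁻¹ ∈ N,
      (⟨h * g * h⁻¹ * g⁻¹, hmem⟩ : N) ∈ pathComponent (1 : N) := by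
  have mem : ∀ x : H, h * x * h⁻¹ * x⁻¹ ∈ N := fun x => by
    have : x * h⁻¹ * x⁻¹ ∈ N := hN.conj_mem _ (N.inv_mem hh) x
    have := N.mul_mem hh this
    simpa [mul_assoc] using this
  refine ⟨mem g, ?_⟩
  obtain γ := hg.somePath
  refine ⟨{ toFun := fun t => ⟨h * γ t * h⁻¹ * (γ t)⁻¹, mem _⟩
            continuous_toFun := ?_
            source' := ?_
            target' := ?_ }⟩
  · exact Continuous.subtype_mk (by continuity) _
  · simp
  · simp
end
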